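/- Let f : T² → T² be an area preserving toral endomorphism. Then f is not transitive if and only if there exists a complementary pair of strictly f-invariant regular open sets U, V ⊂ T², i.e. non-empty regular open sets with f⁻¹(U) = U, f⁻¹(V) = V, and U = T² \ closure(V). -/

import Mathlib

open MeasureTheory Topology Polynomial Set

theorem Real.fact_zero_lt_one : Fact ((0 : ℝ) < 1) :=
  ⟨zero_lt_one⟩

attribute [local instance] Real.fact_zero_lt_one

noncomputable section

/-- The two-dimensional torus `ℝ²/ℤ²`. -/
abbrev T2 : Type := AddCircle (1 : ℝ) × AddCircle (1 : ℝ)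

/-- The canonical projection `π : ℝ² → T²`. -/
def pr : ℝ × ℝ → T2 := fun p => ((p.1 : AddCircle (1 : ℝ)), (p.2 : AddCircle (1 : ℝ)))

/-- The linear action of a `2×2` integer matrix on `ℝ²`. -/
def matAct (A : Matrix (Fin 2) (Fin 2) ℤ) (p : ℝ × ℝ) : ℝ × ℝ :=
  (((A 0 0 : ℤ) : ℝ) * p.1 + ((A 0 1 : ℤ) : ℝ) * p.2,
   ((A 1 0 : ℤ) : ℝ) * p.1 + ((A 1 1 : ℤ) : ℝ) * p.2)

/-- The action of a `2×2` integer matrix on `ℤ² ≅ π₁(T²)`. -/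
def matActZ (A : Matrix (Fin 2) (Fin 2) ℤ) (v : ℤ × ℤ) : ℤ × ℤ :=
  (A 0 0 * v.1 + A 0 1 * v.2, A 1 0 * v.1 + A 1 1 * v.2)

/-- `f` preserves the Haar (Lebesgue) measure of the torus:
`λ(f⁻¹(A)) = λ(A)` for every Borel set `A`. -/
def AreaPreserving (f : T2 → T2) : Prop :=
  ∀ s : Set T2, MeasurableSet s → volume (f ⁻¹' s) = volume s

/-- `f` is topologically transitive: some forward orbit is dense. -/
def TopTransitive (f : T2 → T2) : Prop :=
  ∃ x : T2, Dense (Set.range fun n : ℕ => f^[n] x)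

/-- The open set is regular: it equals the interior of its closure. -/
def IsRegularOpenSet (U : Set T2) : Prop :=
  U = interior (closure U)

/-- A connected open set `U ⊆ T²` is elementary if the canonical projection `pr`
restricts to a homeomorphism from each connected component of `pr ⁻¹' U` onto `U`. -/
def IsElementary (U : Set T2) : Prop :=
  ∀ x ∈ pr ⁻¹' U,
    ∃ e : (connectedComponentIn (pr ⁻¹' U) x) ≃ₜ U,
      ∀ y : connectedComponentIn (pr ⁻¹' U) x, (e y : T2) = pr (y : ℝ × ℝ)

/-!
If no orbit is dense, Baire's theorem yields a non-empty open `B` whose backward orbit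
`W = ⋃ₙ f⁻ⁿ(B)` is not dense. Then `f⁻¹(W) ⊆ W` have equal area, so `W \ closure (f⁻¹ W)` is an
open null set, hence empty, and `closure (f⁻¹ W) = closure W`. Since `f` is open and continuous,
preimages commute with closure and interior, so the regular open hull `interior (closure W)` and
its complement `(closure W)ᶜ` are strictly invariant. Conversely, a point with dense orbit would
lie in every non-empty strictly invariant open set, in particular in both sets of a pair.
-/

section Dynamics

variable {X : Type*} {f : X → X}

lemma preimage_iterate_eq_self {s : Set X} (h : f ⁻¹' s = s) (n : ℕ) : f^[n] ⁻¹' s = s := by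
  rw [preimage_iterate_eq]
  exact Function.iterate_fixed h n

lemma preimage_iUnion_preimage_iterate_subset (B : Set X) :
    f ⁻¹' ⋃ n : ℕ, f^[n] ⁻¹' B ⊆ ⋃ n : ℕ, f^[n] ⁻¹' B := by
  rw [preimage_iUnion]
  refine iUnion_subset fun n => ?_
  rw [← preimage_comp, ← Function.iterate_succ]
  exact subset_iUnion (fun m : ℕ => f^[m] ⁻¹' B) (n + 1)

variable [TopologicalSpace X]

lemma mem_of_dense_orbit {U : Set X} {x : X} (hx : Dense (range fun n : ℕ => f^[n] x))
    (hU : IsOpen U) (hUne : U.Nonempty) (hinv : f ⁻¹' U = U) : x ∈ U := by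
  obtain ⟨_, ⟨n, rfl⟩, hxU⟩ := hx.exists_mem_open hU hUne
  rw [← preimage_iterate_eq_self hinv n]
  exact hxU

/-- Birkhoff's transitivity theorem. -/
theorem exists_dense_orbit_of_dense_iUnion_preimage_iterate [SecondCountableTopology X]
    [BaireSpace X] [Nonempty X] (hf : Continuous f)
    (h : ∀ B : Set X, IsOpen B → B.Nonempty → Dense (⋃ n : ℕ, f^[n] ⁻¹' B)) :
    ∃ x, Dense (range fun n : ℕ => f^[n] x) := by
  obtain ⟨b, hbc, -, hb⟩ := TopologicalSpace.exists_countable_basis X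
  let S : Set (Set X) := {o ∈ b | o.Nonempty}
  have hopen : ∀ o ∈ S, IsOpen (⋃ n : ℕ, f^[n] ⁻¹' o) := fun o ho =>
    isOpen_iUnion fun n => (hb.isOpen ho.1).preimage (hf.iterate n)
  obtain ⟨x, hx⟩ := (dense_biInter_of_isOpen hopen (hbc.mono (sep_subset _ _))
    fun o ho => h o (hb.isOpen ho.1) ho.2).nonempty
  refine ⟨x, hb.dense_iff.2 fun o ho hne => ?_⟩
  obtain ⟨n, hn⟩ := mem_iUnion.1 (mem_iInter₂.1 hx o ⟨ho, hne⟩)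
  exact ⟨f^[n] x, hn, n, rfl⟩

lemma closure_preimage_eq_closure_of_measure_eq [MeasurableSpace X] [OpensMeasurableSpace X]
    {μ : Measure X} [IsFiniteMeasure μ] [μ.IsOpenPosMeasure] (hf : Continuous f) {W : Set X}
    (hW : IsOpen W) (hsub : f ⁻¹' W ⊆ W) (hμ : μ (f ⁻¹' W) = μ W) :
    closure (f ⁻¹' W) = closure W := by
  have hnull : μ (W \ f ⁻¹' W) = 0 :=
    (ae_eq_set.1 (ae_eq_of_subset_of_measure_ge hsub hμ.ge
      (hW.preimage hf).measurableSet.nullMeasurableSet (measure_ne_top μ W))).2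
  have hgap : W \ closure (f ⁻¹' W) = ∅ :=
    (hW.sdiff isClosed_closure).eq_empty_of_measure_zero
      (measure_mono_null (sdiff_subset_sdiff_right subset_closure) hnull)
  exact (closure_mono hsub).antisymm (closure_minimal (sdiff_eq_empty.1 hgap) isClosed_closure)

end Dynamics

lemma isRegularOpenSet_interior {C : Set T2} (hC : IsClosed C) :
    IsRegularOpenSet (interior C) :=
  (interior_maximal subset_closure isOpen_interior).antisymm
    (interior_mono (closure_minimal interior_subset hC))

lemma exists_complementary_pair_of_closure_preimage_eq {f : T2 → T2} (hf : Continuous f)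
    (hfo : IsOpenMap f) {W : Set T2} (hW : IsOpen W) (hWne : W.Nonempty) (hWd : ¬ Dense W)
    (hinv : closure (f ⁻¹' W) = closure W) :
    ∃ U V : Set T2, U.Nonempty ∧ V.Nonempty ∧
      IsRegularOpenSet U ∧ IsRegularOpenSet V ∧
      f ⁻¹' U = U ∧ f ⁻¹' V = V ∧ U = (closure V)ᶜ := by
  refine ⟨interior (closure W), (closure W)ᶜ, hWne.mono (interior_maximal subset_closure hW),
    nonempty_compl.2 (mt dense_iff_closure_eq.2 hWd),
    isRegularOpenSet_interior isClosed_closure, ?_, ?_, ?_, ?_⟩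
  · rw [← interior_compl]
    exact isRegularOpenSet_interior hW.isClosed_compl
  · rw [hfo.preimage_interior_eq_interior_preimage hf,
      hfo.preimage_closure_eq_closure_preimage hf, hinv]
  · rw [preimage_compl, hfo.preimage_closure_eq_closure_preimage hf, hinv]
  · rw [closure_compl, compl_compl]

/-- An area preserving toral endomorphism is not transitive iff there is
a complementary pair of strictly invariant non-empty regular open sets. -/
theorem statement4
    (f : T2 → T2) (hf : IsLocalHomeomorph f) (hpres : AreaPreserving f) :
    ¬ TopTransitive f ↔
      ∃ U V : Set T2, U.Nonempty ∧ V.Nonempty ∧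
        IsRegularOpenSet U ∧ IsRegularOpenSet V ∧
        f ⁻¹' U = U ∧ f ⁻¹' V = V ∧ U = (closure V)ᶜ := by
  constructor
  · intro hnt
    obtain ⟨B, hB, hBne, hWd⟩ :
        ∃ B : Set T2, IsOpen B ∧ B.Nonempty ∧ ¬ Dense (⋃ n : ℕ, f^[n] ⁻¹' B) := by
      by_contra! h
      exact hnt (exists_dense_orbit_of_dense_iUnion_preimage_iterate hf.continuous h)
    set W := ⋃ n : ℕ, f^[n] ⁻¹' B
    have hW : IsOpen W := isOpen_iUnion fun n => hB.preimage (hf.continuous.iterate n)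
    have hBW : B ⊆ W := subset_iUnion (fun n : ℕ => f^[n] ⁻¹' B) 0
    exact exists_complementary_pair_of_closure_preimage_eq hf.continuous hf.isOpenMap hW
      (hBne.mono hBW) hWd (closure_preimage_eq_closure_of_measure_eq hf.continuous hW
        (preimage_iUnion_preimage_iterate_subset B) (hpres W hW.measurableSet))
  · rintro ⟨U, V, hUne, hVne, -, hV, hUinv, hVinv, rfl⟩ ⟨x, hx⟩
    have hxV : x ∈ V := mem_of_dense_orbit hx (hV ▸ isOpen_interior) hVne hVinv
    exact mem_of_dense_orbit hx isClosed_closure.isOpen_compl hUne hUinv (subset_closure hxV)
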